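/- arXiv:2101.03658 — 2 statements merged into one kernel-verified Lean document; each statement's English description precedes it below -/
import Mathlib

section
/- Let L_n be the weighted least squares projection onto Π_n^d associated with an MZ family with constants A ≤ B and condition number κ = B/A, and let D_n be the discretized reproducing kernel. Then the operator norm satisfies ‖L_n‖ ≤ B^{1/2} max_{x∈S^d} D_n(x,x)^{1/2} ≤ κ^{1/2} max_{x∈S^d} E_n(x,x)^{1/2}, where E_n is the L² reproducing kernel of Π_n^d. -/
noncomputable section
open MeasureTheory Real
open scoped BigOperators RealInnerProductSpace

abbrev Sphere (d : ℕ) := Metric.sphere (0 : EuclideanSpace ℝ (Fin (d+1))) 1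

/-- Spherical polynomials of degree at most `n`: restrictions to the sphere of
polynomials on `ℝ^{d+1}` of total degree at most `n`. -/
def spherePoly (d n : ℕ) : Submodule ℝ (Sphere d → ℝ) :=
  Submodule.span ℝ { f | ∃ P : MvPolynomial (Fin (d+1)) ℝ, P.totalDegree ≤ n ∧
    ∀ x : Sphere d, f x = MvPolynomial.eval (fun i => (x : EuclideanSpace ℝ (Fin (d+1))) i) P }

/-- The map on the sphere induced by a linear isometry of the ambient space. -/
def sphereMap {d : ℕ} (R : EuclideanSpace ℝ (Fin (d+1)) ≃ₗᵢ[ℝ] EuclideanSpace ℝ (Fin (d+1)))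
    (x : Sphere d) : Sphere d :=
  ⟨R x, by
    have hx : ‖(x : EuclideanSpace ℝ (Fin (d+1)))‖ = 1 := by
      have := x.2
      simpa [mem_sphere_iff_norm] using this
    simp [mem_sphere_iff_norm, R.norm_map, hx]⟩

/-- Rotation invariance of a measure on the sphere; for a probability measure this pins down
the normalized surface measure. -/
def RotInv {d : ℕ} (μ : Measure (Sphere d)) : Prop :=
  ∀ R : EuclideanSpace ℝ (Fin (d+1)) ≃ₗᵢ[ℝ] EuclideanSpace ℝ (Fin (d+1)),
    Measure.map (sphereMap R) μ = μ

/-! For `‖f‖ ≤ 1`, weighted Cauchy–Schwarz bounds `|∑ₖ f(xₖ) D(xₖ, x) τₖ|` by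
`√(∑ₖ τₖ) √(∑ₖ τₖ D(xₖ, x)²)`; here `∑ₖ τₖ ≤ B` is the upper MZ inequality at `p = 1`, and
`∑ₖ τₖ D(xₖ, x)² = D(x, x)` is the reproducing property of `D` at `D(·, x)`.
For `A D(x, x) ≤ E(x, x)` expand `0 ≤ ∫ (A D(·, x) - E(·, x))²`, using
`∫ D(·, x) E(·, x) = D(x, x)`, `∫ E(·, x)² = E(x, x)` and the lower MZ inequality
`A ∫ D(·, x)² ≤ D(x, x)`. Both suprema are finite since, by symmetry, the diagonals
`K(x, x) = ∑ₖ K(x, xₖ) D(x, xₖ) τₖ` (`K = D, E`) are continuous on the compact sphere. -/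

lemma abs_sum_mul_mul_le_sqrt_mul_sqrt {ι : Type*} (s : Finset ι) {a b τ : ι → ℝ}
    (hτ : ∀ k, 0 ≤ τ k) (ha : ∀ k, |a k| ≤ 1) :
    |∑ k ∈ s, a k * b k * τ k| ≤ √(∑ k ∈ s, τ k) * √(∑ k ∈ s, τ k * b k ^ 2) := by
  rw [← sqrt_mul (Finset.sum_nonneg fun k _ => hτ k)]
  refine abs_le_sqrt (Finset.sum_sq_le_sum_mul_sum_of_sq_le_mul s (fun k _ => hτ k)
    (fun k _ => mul_nonneg (hτ k) (sq_nonneg _)) fun k _ => ?_)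
  calc (a k * b k * τ k) ^ 2 = a k ^ 2 * (τ k * (τ k * b k ^ 2)) := by ring
    _ ≤ τ k * (τ k * b k ^ 2) :=
      mul_le_of_le_one_left (by have := hτ k; positivity) ((sq_le_one_iff_abs_le_one _).2 (ha k))

section Compact

variable {X : Type*} [TopologicalSpace X] [CompactSpace X] [MeasurableSpace X]
  [OpensMeasurableSpace X] {μ : Measure X} [IsFiniteMeasure μ]

lemma Continuous.integrable_of_compactSpace {f : X → ℝ} (hf : Continuous f) : Integrable f μ :=
  hf.integrable_of_hasCompactSupport (HasCompactSupport.of_compactSpace f)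

lemma mul_integral_mul_le_integral_sq {p q : X → ℝ} (hp : Continuous p) (hq : Continuous q)
    {A : ℝ} (hA : 0 ≤ A) (hpq : A * ∫ x, p x ^ 2 ∂μ ≤ ∫ x, p x * q x ∂μ) :
    A * ∫ x, p x * q x ∂μ ≤ ∫ x, q x ^ 2 ∂μ := by
  have hexpand : ∫ x, (A * p x - q x) ^ 2 ∂μ
      = A ^ 2 * ∫ x, p x ^ 2 ∂μ - 2 * A * ∫ x, p x * q x ∂μ + ∫ x, q x ^ 2 ∂μ := by
    have hpp_int : Integrable (fun x => p x ^ 2) μ := (hp.pow 2).integrable_of_compactSpace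
    have hpq_int : Integrable (fun x => p x * q x) μ := (hp.mul hq).integrable_of_compactSpace
    have hqq_int : Integrable (fun x => q x ^ 2) μ := (hq.pow 2).integrable_of_compactSpace
    calc ∫ x, (A * p x - q x) ^ 2 ∂μ
        = ∫ x, A ^ 2 * p x ^ 2 - 2 * A * (p x * q x) + q x ^ 2 ∂μ := by congr with x; ring
      _ = _ := by
        rw [integral_add _ hqq_int, integral_sub (hpp_int.const_mul _) (hpq_int.const_mul _),
          integral_const_mul, integral_const_mul]
        exact (hpp_int.const_mul _).sub (hpq_int.const_mul _)
  have hsq : 0 ≤ ∫ x, (A * p x - q x) ^ 2 ∂μ := integral_nonneg fun x => sq_nonneg _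
  nlinarith

end Compact

section DiscreteKernel

variable {X ι : Type*} [Fintype ι]

def IsDiscreteReproducingKernel (V : Submodule ℝ (X → ℝ)) (pt : ι → X) (τ : ι → ℝ)
    (D : X → X → ℝ) : Prop :=
  (∀ y, (fun x => D x y) ∈ V) ∧ ∀ p ∈ V, ∀ x, p x = ∑ k, p (pt k) * D (pt k) x * τ k

variable {V : Submodule ℝ (X → ℝ)} {pt : ι → X} {τ : ι → ℝ} {D : X → X → ℝ}

lemma IsDiscreteReproducingKernel.diag_eq_sum_mul_sq (hD : IsDiscreteReproducingKernel V pt τ D)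
    (x : X) : D x x = ∑ k, τ k * D (pt k) x ^ 2 := by
  rw [hD.2 _ (hD.1 x) x]
  exact Finset.sum_congr rfl fun k _ => by ring

lemma IsDiscreteReproducingKernel.continuous_diag [TopologicalSpace X]
    (hV : ∀ p ∈ V, Continuous p) (hD : IsDiscreteReproducingKernel V pt τ D)
    (hDsymm : ∀ x y, D x y = D y x) {K : X → X → ℝ} (hKmem : ∀ y, (fun x => K x y) ∈ V)
    (hKsymm : ∀ x y, K x y = K y x) : Continuous fun x => K x x := by
  have hK : (fun x => K x x) = fun x => ∑ k, K x (pt k) * D x (pt k) * τ k := by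
    funext x
    rw [hD.2 _ (hKmem x) x]
    simp only [hKsymm (pt _) x, hDsymm (pt _) x]
  rw [hK]
  exact continuous_finsetSum _ fun k _ =>
    ((hV _ (hKmem (pt k))).mul (hV _ (hD.1 (pt k)))).mul continuous_const

lemma IsDiscreteReproducingKernel.abs_sum_mul_le (hτ : ∀ k, 0 ≤ τ k)
    (hD : IsDiscreteReproducingKernel V pt τ D) {a : ι → ℝ} (ha : ∀ k, |a k| ≤ 1) (x : X) :
    |∑ k, a k * D (pt k) x * τ k| ≤ √(∑ k, τ k) * √(D x x) := by
  rw [hD.diag_eq_sum_mul_sq]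
  exact abs_sum_mul_mul_le_sqrt_mul_sqrt _ hτ ha

lemma IsDiscreteReproducingKernel.mul_diag_le_diag [TopologicalSpace X] [CompactSpace X]
    [MeasurableSpace X] [OpensMeasurableSpace X] {μ : Measure X} [IsFiniteMeasure μ]
    {E : X → X → ℝ} {A : ℝ} (hA : 0 ≤ A) (hV : ∀ p ∈ V, Continuous p)
    (hMZ : ∀ p ∈ V, A * ∫ y, p y ^ 2 ∂μ ≤ ∑ k, τ k * p (pt k) ^ 2)
    (hD : IsDiscreteReproducingKernel V pt τ D) (hEmem : ∀ y, (fun x => E x y) ∈ V)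
    (hErepr : ∀ p ∈ V, ∀ x, p x = ∫ y, p y * E y x ∂μ) (x : X) :
    A * D x x ≤ E x x := by
  have hDE : ∫ y, D y x * E y x ∂μ = D x x := (hErepr _ (hD.1 x) x).symm
  have hEE : ∫ y, E y x ^ 2 ∂μ = E x x := by
    simpa only [sq] using (hErepr _ (hEmem x) x).symm
  rw [← hDE, ← hEE]
  refine mul_integral_mul_le_integral_sq (hV _ (hD.1 x)) (hV _ (hEmem x)) hA ?_
  rw [hDE, hD.diag_eq_sum_mul_sq]
  exact hMZ _ (hD.1 x)

end DiscreteKernel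

lemma iSup_sqrt_le_iSup_sqrt_div {X : Type*} {f g : X → ℝ} {A : ℝ} (hA : 0 < A)
    (hg : BddAbove (Set.range fun x => √(g x))) (hfg : ∀ x, A * f x ≤ g x) :
    ⨆ x, √(f x) ≤ (⨆ x, √(g x)) / √A := by
  refine Real.iSup_le (fun x => ?_) (div_nonneg (Real.iSup_nonneg fun _ => sqrt_nonneg _)
    (sqrt_nonneg _))
  calc √(f x) ≤ √(g x / A) := sqrt_le_sqrt ((le_div_iff₀' hA).2 (hfg x))
    _ = √(g x) / √A := sqrt_div' _ hA.le
    _ ≤ (⨆ x, √(g x)) / √A := by gcongr; exact le_ciSup hg x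

lemma spherePoly_continuous {d n : ℕ} {p : Sphere d → ℝ} (hp : p ∈ spherePoly d n) :
    Continuous p := by
  induction hp using Submodule.span_induction with
  | mem f hf =>
    obtain ⟨P, -, hP⟩ := hf
    rw [show f = _ from funext hP]
    exact (MvPolynomial.continuous_eval P).comp (by fun_prop)
  | zero => exact continuous_const
  | add f g _ _ hf hg => exact hf.add hg
  | smul a f _ hf => exact hf.const_smul a

lemma one_mem_spherePoly (d n : ℕ) : (fun _ : Sphere d => (1 : ℝ)) ∈ spherePoly d n :=
  Submodule.subset_span ⟨1, by simp, fun _ => by simp⟩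

theorem lsq_operator_norm_bound_general (d : ℕ)
    (σm : Measure (Sphere d)) [IsProbabilityMeasure σm]
    (n l : ℕ) (pt : Fin l → Sphere d) (τ : Fin l → ℝ) (hτ : ∀ k, 0 < τ k)
    (A B : ℝ) (hA : 0 < A)
    (hMZ : ∀ p ∈ spherePoly d n,
      A * ∫ y, (p y)^2 ∂σm ≤ ∑ k, τ k * (p (pt k))^2 ∧
      ∑ k, τ k * (p (pt k))^2 ≤ B * ∫ y, (p y)^2 ∂σm)
    (E : Sphere d → Sphere d → ℝ)
    (hEmem : ∀ y, (fun x => E x y) ∈ spherePoly d n)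
    (hEsymm : ∀ x y, E x y = E y x)
    (hErepr : ∀ p ∈ spherePoly d n, ∀ x, p x = ∫ y, p y * E y x ∂σm)
    (D : Sphere d → Sphere d → ℝ)
    (hDmem : ∀ y, (fun x => D x y) ∈ spherePoly d n)
    (hDsymm : ∀ x y, D x y = D y x)
    (hDrepr : ∀ p ∈ spherePoly d n, ∀ x, p x = ∑ k, p (pt k) * D (pt k) x * τ k) :
    sSup {r : ℝ | ∃ f : C(Sphere d, ℝ), ‖f‖ ≤ 1 ∧
        r = ⨆ x : Sphere d, |∑ k, f (pt k) * D (pt k) x * τ k|}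
      ≤ Real.sqrt B * ⨆ x : Sphere d, Real.sqrt (D x x) ∧
    (Real.sqrt B * ⨆ x : Sphere d, Real.sqrt (D x x))
      ≤ Real.sqrt (B / A) * ⨆ x : Sphere d, Real.sqrt (E x x) := by
  have hD : IsDiscreteReproducingKernel (spherePoly d n) pt τ D := ⟨hDmem, hDrepr⟩
  have hV : ∀ p ∈ spherePoly d n, Continuous p := fun _ => spherePoly_continuous
  have hτB : ∑ k, τ k ≤ B := by simpa using (hMZ _ (one_mem_spherePoly d n)).2
  have hDbdd : BddAbove (Set.range fun x => √(D x x)) :=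
    (isCompact_range (hD.continuous_diag hV hDsymm hDmem hDsymm).sqrt).bddAbove
  have hEbdd : BddAbove (Set.range fun x => √(E x x)) :=
    (isCompact_range (hD.continuous_diag hV hDsymm hEmem hEsymm).sqrt).bddAbove
  have hDE : ∀ x, A * D x x ≤ E x x :=
    hD.mul_diag_le_diag hA.le hV (fun p hp => (hMZ p hp).1) hEmem hErepr
  have hsupD_nonneg : 0 ≤ ⨆ x, √(D x x) := Real.iSup_nonneg fun _ => sqrt_nonneg _
  constructor
  · refine Real.sSup_le ?_ (mul_nonneg (sqrt_nonneg _) hsupD_nonneg)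
    rintro _ ⟨f, hf, rfl⟩
    refine Real.iSup_le (fun x => ?_) (mul_nonneg (sqrt_nonneg _) hsupD_nonneg)
    calc |∑ k, f (pt k) * D (pt k) x * τ k|
        ≤ √(∑ k, τ k) * √(D x x) :=
          hD.abs_sum_mul_le (fun k => (hτ k).le) (fun k => (f.norm_coe_le_norm _).trans hf) x
      _ ≤ √B * ⨆ x, √(D x x) := by gcongr; exact le_ciSup hDbdd x
  · calc √B * ⨆ x, √(D x x) ≤ √B * ((⨆ x, √(E x x)) / √A) := by
          gcongr; exact iSup_sqrt_le_iSup_sqrt_div hA hEbdd hDE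
      _ = √(B / A) * ⨆ x, √(E x x) := by rw [sqrt_div' _ hA.le]; ring

/-- the operator norm of the weighted least squares operator satisfies
`‖L_n‖ ≤ B^{1/2} max_x D_n(x,x)^{1/2} ≤ κ^{1/2} max_x E_n(x,x)^{1/2}` with `κ = B/A`. -/
theorem lsq_operator_norm_bound (d : ℕ) (hd : 2 ≤ d)
    (σm : Measure (Sphere d)) [IsProbabilityMeasure σm] (hinv : RotInv σm)
    (n l : ℕ) (pt : Fin l → Sphere d) (τ : Fin l → ℝ) (hτ : ∀ k, 0 < τ k)
    (A B : ℝ) (hA : 0 < A) (hAB : A ≤ B)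
    (hMZ : ∀ p ∈ spherePoly d n,
      A * ∫ y, (p y)^2 ∂σm ≤ ∑ k, τ k * (p (pt k))^2 ∧
      ∑ k, τ k * (p (pt k))^2 ≤ B * ∫ y, (p y)^2 ∂σm)
    (E : Sphere d → Sphere d → ℝ)
    (hEmem : ∀ y, (fun x => E x y) ∈ spherePoly d n)
    (hEsymm : ∀ x y, E x y = E y x)
    (hErepr : ∀ p ∈ spherePoly d n, ∀ x, p x = ∫ y, p y * E y x ∂σm)
    (D : Sphere d → Sphere d → ℝ)
    (hDmem : ∀ y, (fun x => D x y) ∈ spherePoly d n)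
    (hDsymm : ∀ x y, D x y = D y x)
    (hDrepr : ∀ p ∈ spherePoly d n, ∀ x, p x = ∑ k, p (pt k) * D (pt k) x * τ k) :
    sSup {r : ℝ | ∃ f : C(Sphere d, ℝ), ‖f‖ ≤ 1 ∧
        r = ⨆ x : Sphere d, |∑ k, f (pt k) * D (pt k) x * τ k|}
      ≤ Real.sqrt B * ⨆ x : Sphere d, Real.sqrt (D x x) ∧
    (Real.sqrt B * ⨆ x : Sphere d, Real.sqrt (D x x))
      ≤ Real.sqrt (B / A) * ⨆ x : Sphere d, Real.sqrt (E x x) :=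
  lsq_operator_norm_bound_general d σm n l pt τ hτ A B hA hMZ E hEmem hEsymm hErepr D hDmem hDsymm
    hDrepr
end
end

section
/- Let L_n be the weighted least squares projection and S_n the L² orthogonal projection onto Π_n^d, for an MZ family with constants A ≤ B. Then for every continuous f on S^d, ‖S_n f − L_n f‖₂² ≤ A^{-2} B ‖f − S_n f‖_{(n)}², where ‖g‖_{(n)}² = Σ_k |g(x_{n,k})|² τ_{n,k}. -/
noncomputable section
open MeasureTheory Real
open scoped BigOperators RealInnerProductSpace

/-- `g` is a weighted least squares polynomial of `f` for the sampling data. -/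
def IsLSQ {d : ℕ} (n l : ℕ) (pt : Fin l → Sphere d) (τ : Fin l → ℝ)
    (f g : Sphere d → ℝ) : Prop :=
  g ∈ spherePoly d n ∧ ∀ p ∈ spherePoly d n,
    ∑ k, (f (pt k) - g (pt k))^2 * τ k ≤ ∑ k, (f (pt k) - p (pt k))^2 * τ k

/-!
The least squares residual `f - L_n f` is orthogonal to `Π_n^d` for the discrete inner product
`⟨u, v⟩ = Σ_k u(x_k) v(x_k) τ_k`, so Pythagoras gives `‖S_n f - L_n f‖_{(n)} ≤ ‖f - S_n f‖_{(n)}`.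
The lower MZ inequality turns the left side into `A ‖S_n f - L_n f‖₂²`, and `A⁻¹ ≤ A⁻² B`.
-/

section LeastSquares

variable {X ι : Type*} [Fintype ι]

def IsWeightedLeastSquares (V : Submodule ℝ (X → ℝ)) (pt : ι → X) (w : ι → ℝ) (f g : X → ℝ) :
    Prop :=
  g ∈ V ∧ ∀ p ∈ V, ∑ k, (f (pt k) - g (pt k)) ^ 2 * w k ≤ ∑ k, (f (pt k) - p (pt k)) ^ 2 * w k

namespace IsWeightedLeastSquares

variable {V : Submodule ℝ (X → ℝ)} {pt : ι → X} {w : ι → ℝ} {f g : X → ℝ}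

theorem sum_residual_mul_eq_zero (hg : IsWeightedLeastSquares V pt w f g) {p : X → ℝ}
    (hp : p ∈ V) : ∑ k, (f (pt k) - g (pt k)) * p (pt k) * w k = 0 := by
  set a := ∑ k, p (pt k) ^ 2 * w k
  set b := ∑ k, (f (pt k) - g (pt k)) * p (pt k) * w k
  -- `t ↦ Σ (f - g - t p)² w` is minimal at `t = 0`, so its discriminant `4 b²` is `≤ 0`.
  have hquad : ∀ t : ℝ, 0 ≤ a * (t * t) + (-2 * b) * t + 0 := by
    intro t
    have h := hg.2 (g + t • p) (V.add_mem hg.1 (V.smul_mem t hp))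
    have expand : ∑ k, (f (pt k) - (g + t • p) (pt k)) ^ 2 * w k
        = ∑ k, (f (pt k) - g (pt k)) ^ 2 * w k + (a * (t * t) + (-2 * b) * t) := by
      simp only [a, b, Finset.mul_sum, Finset.sum_mul, ← Finset.sum_add_distrib]
      refine Finset.sum_congr rfl fun k _ => ?_
      simp only [Pi.add_apply, Pi.smul_apply, smul_eq_mul]
      ring
    linarith
  have hdisc := discrim_le_zero hquad
  rw [discrim] at hdisc
  nlinarith [sq_nonneg b]

theorem sum_sq_sub_eq_add (hg : IsWeightedLeastSquares V pt w f g) {s : X → ℝ} (hs : s ∈ V) :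
    ∑ k, (f (pt k) - s (pt k)) ^ 2 * w k
      = ∑ k, (f (pt k) - g (pt k)) ^ 2 * w k + ∑ k, (s (pt k) - g (pt k)) ^ 2 * w k := by
  have horth := hg.sum_residual_mul_eq_zero (V.sub_mem hs hg.1)
  simp only [Pi.sub_apply] at horth
  rw [← sub_zero (_ + _), ← mul_zero (2 : ℝ), ← horth, Finset.mul_sum, ← Finset.sum_add_distrib,
    ← Finset.sum_sub_distrib]
  exact Finset.sum_congr rfl fun k _ => by ring

theorem sum_sq_sub_le (hg : IsWeightedLeastSquares V pt w f g) (hw : ∀ k, 0 ≤ w k)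
    {s : X → ℝ} (hs : s ∈ V) :
    ∑ k, (s (pt k) - g (pt k)) ^ 2 * w k ≤ ∑ k, (f (pt k) - s (pt k)) ^ 2 * w k := by
  rw [hg.sum_sq_sub_eq_add hs, le_add_iff_nonneg_left]
  exact Finset.sum_nonneg fun k _ => mul_nonneg (sq_nonneg _) (hw k)

end IsWeightedLeastSquares

end LeastSquares

theorem lsq_vs_l2_projection_general (d : ℕ)
    (σm : Measure (Sphere d))
    (n l : ℕ) (pt : Fin l → Sphere d) (τ : Fin l → ℝ) (hτ : ∀ k, 0 < τ k)
    (A B : ℝ) (hA : 0 < A) (hAB : A ≤ B)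
    (hMZ : ∀ p ∈ spherePoly d n,
      A * ∫ y, (p y)^2 ∂σm ≤ ∑ k, τ k * (p (pt k))^2 ∧
      ∑ k, τ k * (p (pt k))^2 ≤ B * ∫ y, (p y)^2 ∂σm)
    (f : C(Sphere d, ℝ))
    -- `s = S_n f` is the `L²(σ)` orthogonal projection of `f` onto `Π_n^d`
    (s : Sphere d → ℝ) (hs : s ∈ spherePoly d n)
    (g : Sphere d → ℝ) (hg : IsLSQ n l pt τ (fun x => f x) g) :
    ∫ x, (s x - g x)^2 ∂σm ≤ A⁻¹^2 * B * ∑ k, (f (pt k) - s (pt k))^2 * τ k := by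
  have hg' : IsWeightedLeastSquares (spherePoly d n) pt τ (fun x => f x) g := hg
  set E := ∑ k, (f (pt k) - s (pt k)) ^ 2 * τ k
  have hsampled : ∑ k, (s (pt k) - g (pt k)) ^ 2 * τ k ≤ E :=
    hg'.sum_sq_sub_le (fun k => (hτ k).le) hs
  have hlower : A * ∫ x, (s x - g x) ^ 2 ∂σm ≤ ∑ k, (s (pt k) - g (pt k)) ^ 2 * τ k := by
    simpa only [Pi.sub_apply, mul_comm (τ _)] using (hMZ _ (Submodule.sub_mem _ hs hg.1)).1
  have hE : 0 ≤ E := Finset.sum_nonneg fun k _ => mul_nonneg (sq_nonneg _) (hτ k).le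
  have hL2 : ∫ x, (s x - g x) ^ 2 ∂σm ≤ A⁻¹ * E := by
    rw [le_inv_mul_iff₀ hA]
    exact hlower.trans hsampled
  calc ∫ x, (s x - g x) ^ 2 ∂σm ≤ A⁻¹ * E := hL2
    _ = A⁻¹ ^ 2 * A * E := by field_simp
    _ ≤ A⁻¹ ^ 2 * B * E := by gcongr

/-- for an MZ family with constants `A ≤ B`, the least squares polynomial
`L_n f` and the `L²` projection `S_n f` satisfy
`‖S_n f − L_n f‖₂² ≤ A⁻² B ‖f − S_n f‖_{(n)}²`. -/
theorem lsq_vs_l2_projection (d : ℕ) (hd : 2 ≤ d)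
    (σm : Measure (Sphere d)) [IsProbabilityMeasure σm] (hinv : RotInv σm)
    (n l : ℕ) (pt : Fin l → Sphere d) (τ : Fin l → ℝ) (hτ : ∀ k, 0 < τ k)
    (A B : ℝ) (hA : 0 < A) (hAB : A ≤ B)
    (hMZ : ∀ p ∈ spherePoly d n,
      A * ∫ y, (p y)^2 ∂σm ≤ ∑ k, τ k * (p (pt k))^2 ∧
      ∑ k, τ k * (p (pt k))^2 ≤ B * ∫ y, (p y)^2 ∂σm)
    (f : C(Sphere d, ℝ))
    -- `s = S_n f` is the `L²(σ)` orthogonal projection of `f` onto `Π_n^d`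
    (s : Sphere d → ℝ) (hs : s ∈ spherePoly d n)
    (hproj : ∀ p ∈ spherePoly d n, ∫ x, (f x - s x) * p x ∂σm = 0)
    (g : Sphere d → ℝ) (hg : IsLSQ n l pt τ (fun x => f x) g) :
    ∫ x, (s x - g x)^2 ∂σm ≤ A⁻¹^2 * B * ∑ k, (f (pt k) - s (pt k))^2 * τ k :=
  lsq_vs_l2_projection_general d σm n l pt τ hτ A B hA hAB hMZ f s hs g hg
end
end
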